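/- (First-moment orthogonality for Haar random 2-qubit gates.) Let μ be the Haar probability measure on the compact group U(4) = Matrix.unitaryGroup (Fin 4) ℂ. Let p, q, r, s be normalized 2-qubit Paulis. If p ≠ r or q ≠ s, then ∫ Tr(p·U·q·U†) · Tr(r·U·s·U†) dμ(U) = 0. -/

import Mathlib

/-!
Left multiplication of `U` by a Pauli string `V` changes `Tr(p U q U†)` by the sign `±1` with
which `V` commutes with `p`, and right multiplication by the sign with which it commutes with `q`.
Two distinct Pauli strings are told apart by the commutation sign of some third one (the
commutation pairing is a nondegenerate symplectic form on `𝔽₂⁴`). So if `p ≠ r`, some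
left translation `U ↦ V U` negates the integrand, and if `q ≠ s` some right translation does;
since the Haar probability measure on the compact group `U(4)` is invariant on both sides,
the integral equals its own negative.
-/

open Matrix MeasureTheory

/-- Labels for the four single-qubit Pauli matrices. -/
inductive PauliLabel : Type
  | I | X | Y | Z
  deriving DecidableEq

instance instFintypePauliLabel : Fintype PauliLabel :=
  ⟨{PauliLabel.I, PauliLabel.X, PauliLabel.Y, PauliLabel.Z}, fun x => by cases x <;> simp⟩

/-- The single-qubit Pauli matrices over `ℂ`. -/
noncomputable def pauliMat : PauliLabel → Matrix (Fin 2) (Fin 2) ℂ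
  | PauliLabel.I => !![1, 0; 0, 1]
  | PauliLabel.X => !![0, 1; 1, 0]
  | PauliLabel.Y => !![0, -Complex.I; Complex.I, 0]
  | PauliLabel.Z => !![1, 0; 0, -1]

/-- The Kronecker product of two `2×2` complex matrices, written out as a `4×4` matrix
(rows/columns ordered as `00, 01, 10, 11`). -/
noncomputable def kron2 (A B : Matrix (Fin 2) (Fin 2) ℂ) : Matrix (Fin 4) (Fin 4) ℂ :=
  !![A 0 0 * B 0 0, A 0 0 * B 0 1, A 0 1 * B 0 0, A 0 1 * B 0 1;
     A 0 0 * B 1 0, A 0 0 * B 1 1, A 0 1 * B 1 0, A 0 1 * B 1 1;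
     A 1 0 * B 0 0, A 1 0 * B 0 1, A 1 1 * B 0 0, A 1 1 * B 0 1;
     A 1 0 * B 1 0, A 1 0 * B 1 1, A 1 1 * B 1 0, A 1 1 * B 1 1]

/-- The 2-qubit Pauli string `σ_a ⊗ σ_b`, as a `4×4` complex matrix. -/
noncomputable def pauli2 (a b : PauliLabel) : Matrix (Fin 4) (Fin 4) ℂ :=
  kron2 (pauliMat a) (pauliMat b)

lemma kron2_mul (A B C D : Matrix (Fin 2) (Fin 2) ℂ) :
    kron2 A B * kron2 C D = kron2 (A * C) (B * D) := by
  ext i j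
  fin_cases i <;> fin_cases j <;>
    simp [kron2, Matrix.mul_apply, Fin.sum_univ_four, Fin.sum_univ_two] <;> ring

lemma kron2_star (A B : Matrix (Fin 2) (Fin 2) ℂ) :
    star (kron2 A B) = kron2 (star A) (star B) := by
  ext i j
  fin_cases i <;> fin_cases j <;>
    simp [kron2, Matrix.star_eq_conjTranspose, Matrix.conjTranspose_apply]

lemma kron2_one : kron2 1 1 = 1 := by
  ext i j
  fin_cases i <;> fin_cases j <;>
    simp [kron2, Matrix.one_apply, Matrix.vecHead, Matrix.vecTail]

lemma pauliMat_mul_star (a : PauliLabel) : pauliMat a * star (pauliMat a) = 1 := by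
  cases a <;>
    · ext i j
      fin_cases i <;> fin_cases j <;>
        simp [pauliMat, Matrix.mul_apply, Fin.sum_univ_two, Matrix.one_apply,
          Matrix.star_eq_conjTranspose, Matrix.conjTranspose_apply]

/-- Every 2-qubit Pauli string is a unitary `4×4` matrix. -/
lemma pauli2_mem_unitaryGroup (a b : PauliLabel) :
    pauli2 a b ∈ Matrix.unitaryGroup (Fin 4) ℂ := by
  rw [Matrix.mem_unitaryGroup_iff, pauli2, kron2_star, kron2_mul,
    pauliMat_mul_star, pauliMat_mul_star, kron2_one]

/-- The 2-qubit Pauli string `σ_a ⊗ σ_b` as an element of the unitary group `U(4)`. -/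
noncomputable def pauli2U (a b : PauliLabel) : Matrix.unitaryGroup (Fin 4) ℂ :=
  ⟨pauli2 a b, pauli2_mem_unitaryGroup a b⟩

/-- The normalized 2-qubit Pauli `(σ_a ⊗ σ_b) / 2`. -/
noncomputable def npauli2 (p : PauliLabel × PauliLabel) : Matrix (Fin 4) (Fin 4) ℂ :=
  (2 : ℂ)⁻¹ • pauli2 p.1 p.2

namespace Matrix

variable {n R : Type*} [Fintype n] [CommSemiring R] [StarRing R]

theorem trace_mul_mul_conjTranspose_mul_left {P Q V : Matrix n n R} {c : R}
    (h : Vᴴ * P * V = c • P) (U : Matrix n n R) :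
    trace (P * (V * U) * Q * (V * U)ᴴ) = c * trace (P * U * Q * Uᴴ) := by
  calc trace (P * (V * U) * Q * (V * U)ᴴ) = trace (Vᴴ * P * V * (U * Q * Uᴴ)) := by
        rw [conjTranspose_mul, ← mul_assoc, trace_mul_comm]; simp only [mul_assoc]
    _ = c * trace (P * U * Q * Uᴴ) := by
        rw [h, Matrix.smul_mul, trace_smul, smul_eq_mul]; simp only [mul_assoc]

theorem trace_mul_mul_conjTranspose_mul_right {P Q V : Matrix n n R} {c : R}
    (h : V * Q * Vᴴ = c • Q) (U : Matrix n n R) :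
    trace (P * (U * V) * Q * (U * V)ᴴ) = c * trace (P * U * Q * Uᴴ) := by
  calc trace (P * (U * V) * Q * (U * V)ᴴ) = trace (P * U * (V * Q * Vᴴ) * Uᴴ) := by
        rw [conjTranspose_mul]; simp only [mul_assoc]
    _ = c * trace (P * U * Q * Uᴴ) := by
        rw [h, Matrix.mul_smul, Matrix.smul_mul, trace_smul, smul_eq_mul]

variable [DecidableEq n]

theorem conjTranspose_mul_mul_eq_smul {V X : Matrix n n R} {c : R} (hV : Vᴴ * V = 1)
    (h : X * V = c • (V * X)) : Vᴴ * X * V = c • X := by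
  rw [mul_assoc, h, Matrix.mul_smul, ← mul_assoc, hV, one_mul]

theorem mul_mul_conjTranspose_eq_smul {V X : Matrix n n R} {c : R} (hV : V * Vᴴ = 1)
    (h : V * X = c • (X * V)) : V * X * Vᴴ = c • X := by
  rw [h, Matrix.smul_mul, mul_assoc, hV, mul_one]

end Matrix

section UnitaryGroup

variable {n 𝕜 : Type*} [Fintype n] [DecidableEq n] [RCLike 𝕜]

theorem Matrix.isCompact_unitaryGroup : IsCompact (unitaryGroup n 𝕜 : Set (Matrix n n 𝕜)) :=
  (isCompact_univ_pi fun _ => isCompact_univ_pi fun _ => isCompact_closedBall (0 : 𝕜) 1)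
    |>.of_isClosed_subset (isClosed_unitary (R := Matrix n n 𝕜)) fun _ hU i _ j _ => by
      simpa using entry_norm_bound_of_unitary hU i j

instance : CompactSpace (unitaryGroup n 𝕜) :=
  isCompact_iff_compactSpace.mp Matrix.isCompact_unitaryGroup

end UnitaryGroup

theorem MeasureTheory.Measure.isMulRightInvariant_of_isProbabilityMeasure {G : Type*} [Group G]
    [TopologicalSpace G] [IsTopologicalGroup G] [LocallyCompactSpace G] [MeasurableSpace G]
    [BorelSpace G] (μ : Measure G) [μ.IsHaarMeasure] [IsProbabilityMeasure μ] :
    μ.IsMulRightInvariant where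
  map_mul_right_eq_self g :=
    have : IsProbabilityMeasure (μ.map (· * g)) :=
      isProbabilityMeasure_map (measurable_mul_const g).aemeasurable
    isHaarMeasure_eq_of_isProbabilityMeasure _ μ

namespace PauliLabel

def commSign (a b : PauliLabel) : ℤ := if a = I ∨ b = I ∨ a = b then 1 else -1

theorem commSign_comm (a b : PauliLabel) : commSign a b = commSign b a := by
  cases a <;> cases b <;> rfl

end PauliLabel

open PauliLabel

theorem kron2_smul_smul (c d : ℂ) (A B : Matrix (Fin 2) (Fin 2) ℂ) :
    kron2 (c • A) (d • B) = (c * d) • kron2 A B := by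
  ext i j
  fin_cases i <;> fin_cases j <;> simp [kron2] <;> ring

theorem pauliMat_mul_comm (a b : PauliLabel) :
    pauliMat a * pauliMat b = (commSign a b : ℂ) • (pauliMat b * pauliMat a) := by
  cases a <;> cases b <;>
    · ext i j
      fin_cases i <;> fin_cases j <;>
        simp [pauliMat, commSign, Matrix.mul_apply, Fin.sum_univ_two]

def pauli2Sign (v p : PauliLabel × PauliLabel) : ℤ := commSign v.1 p.1 * commSign v.2 p.2

theorem pauli2Sign_comm (v p : PauliLabel × PauliLabel) : pauli2Sign v p = pauli2Sign p v := by
  rw [pauli2Sign, pauli2Sign, commSign_comm v.1, commSign_comm v.2]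

theorem exists_pauli2Sign_mul_eq_neg_one {p r : PauliLabel × PauliLabel} (h : p ≠ r) :
    ∃ v, (pauli2Sign v p : ℂ) * pauli2Sign v r = -1 := by
  have separating : ∀ p r : PauliLabel × PauliLabel, p ≠ r →
      ∃ v, pauli2Sign v p * pauli2Sign v r = -1 := by
    decide
  obtain ⟨v, hv⟩ := separating p r h
  exact ⟨v, mod_cast hv⟩

theorem pauli2_mul_comm (v p : PauliLabel × PauliLabel) :
    pauli2 v.1 v.2 * pauli2 p.1 p.2 =
      (pauli2Sign v p : ℂ) • (pauli2 p.1 p.2 * pauli2 v.1 v.2) := by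
  rw [pauli2, pauli2, kron2_mul, kron2_mul, pauliMat_mul_comm v.1, pauliMat_mul_comm v.2,
    kron2_smul_smul, pauli2Sign, Int.cast_mul]

theorem pauli2_mul_npauli2 (v p : PauliLabel × PauliLabel) :
    pauli2 v.1 v.2 * npauli2 p = (pauli2Sign v p : ℂ) • (npauli2 p * pauli2 v.1 v.2) := by
  rw [npauli2, Matrix.mul_smul, pauli2_mul_comm, Matrix.smul_mul, smul_comm]

theorem npauli2_mul_pauli2 (p v : PauliLabel × PauliLabel) :
    npauli2 p * pauli2 v.1 v.2 = (pauli2Sign v p : ℂ) • (pauli2 v.1 v.2 * npauli2 p) := by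
  rw [npauli2, Matrix.smul_mul, pauli2_mul_comm, pauli2Sign_comm, Matrix.mul_smul, smul_comm]

theorem conjTranspose_pauli2_mul_pauli2 (a b : PauliLabel) : (pauli2 a b)ᴴ * pauli2 a b = 1 :=
  (pauli2_mem_unitaryGroup a b).1

theorem pauli2_mul_conjTranspose_pauli2 (a b : PauliLabel) : pauli2 a b * (pauli2 a b)ᴴ = 1 :=
  (pauli2_mem_unitaryGroup a b).2

noncomputable def pauliTransfer (p q : PauliLabel × PauliLabel) (U : Matrix (Fin 4) (Fin 4) ℂ) :
    ℂ :=
  (npauli2 p * U * npauli2 q * Uᴴ).trace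

theorem pauliTransfer_pauli2_mul (v p q : PauliLabel × PauliLabel)
    (U : Matrix (Fin 4) (Fin 4) ℂ) :
    pauliTransfer p q (pauli2 v.1 v.2 * U) = pauli2Sign v p * pauliTransfer p q U :=
  Matrix.trace_mul_mul_conjTranspose_mul_left
    (Matrix.conjTranspose_mul_mul_eq_smul (conjTranspose_pauli2_mul_pauli2 _ _)
      (npauli2_mul_pauli2 p v)) U

theorem pauliTransfer_mul_pauli2 (v p q : PauliLabel × PauliLabel)
    (U : Matrix (Fin 4) (Fin 4) ℂ) :
    pauliTransfer p q (U * pauli2 v.1 v.2) = pauli2Sign v q * pauliTransfer p q U :=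
  Matrix.trace_mul_mul_conjTranspose_mul_right
    (Matrix.mul_mul_conjTranspose_eq_smul (pauli2_mul_conjTranspose_pauli2 _ _)
      (pauli2_mul_npauli2 v q)) U

/-- First-moment orthogonality for Haar random 2-qubit gates: for the Haar probability
measure `μ` on `U(4)` and normalized 2-qubit Paulis `p, q, r, s` with `p ≠ r` or `q ≠ s`,
`∫ Tr(p·U·q·U†) · Tr(r·U·s·U†) dμ(U) = 0`. -/
theorem haar_first_moment_orthogonality
    [MeasurableSpace (Matrix.unitaryGroup (Fin 4) ℂ)]
    [BorelSpace (Matrix.unitaryGroup (Fin 4) ℂ)]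
    (μ : Measure (Matrix.unitaryGroup (Fin 4) ℂ))
    [μ.IsHaarMeasure] [IsProbabilityMeasure μ]
    (p q r s : PauliLabel × PauliLabel) (h : p ≠ r ∨ q ≠ s) :
    ∫ U : Matrix.unitaryGroup (Fin 4) ℂ,
      (npauli2 p * (U : Matrix (Fin 4) (Fin 4) ℂ) * npauli2 q *
        (U : Matrix (Fin 4) (Fin 4) ℂ)ᴴ).trace *
      (npauli2 r * (U : Matrix (Fin 4) (Fin 4) ℂ) * npauli2 s *
        (U : Matrix (Fin 4) (Fin 4) ℂ)ᴴ).trace ∂μ = 0 := by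
  change ∫ U : unitaryGroup (Fin 4) ℂ, pauliTransfer p q U * pauliTransfer r s U ∂μ = 0
  rcases h with hpr | hqs
  · obtain ⟨v, hv⟩ := exists_pauli2Sign_mul_eq_neg_one hpr
    refine integral_eq_zero_of_mul_left_eq_neg (g := pauli2U v.1 v.2) fun U => ?_
    rw [Submonoid.coe_mul, pauli2U, pauliTransfer_pauli2_mul, pauliTransfer_pauli2_mul]
    linear_combination (pauliTransfer p q U * pauliTransfer r s U) * hv
  · obtain ⟨v, hv⟩ := exists_pauli2Sign_mul_eq_neg_one hqs
    have := μ.isMulRightInvariant_of_isProbabilityMeasure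
    refine integral_eq_zero_of_mul_right_eq_neg (g := pauli2U v.1 v.2) fun U => ?_
    rw [Submonoid.coe_mul, pauli2U, pauliTransfer_mul_pauli2, pauliTransfer_mul_pauli2]
    linear_combination (pauliTransfer p q U * pauliTransfer r s U) * hv
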